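/- arXiv:2308.14851 — 7 statements merged into one kernel-verified Lean document; each statement's English description precedes it below -/
import Mathlib

section
/- Every Jacobi-orthogonal algebraic curvature tensor is Jacobi-dual: if X, Y are orthogonal unit vectors with J_X Y = λY for some real λ, then J_Y X = λX. -/
open RealInnerProductSpace

theorem jacobi_orthogonal_implies_jacobi_dual {V : Type*} [NormedAddCommGroup V] [InnerProductSpace ℝ V] [FiniteDimensional ℝ V]
    (R : V →ₗ[ℝ] V →ₗ[ℝ] V →ₗ[ℝ] V →ₗ[ℝ] ℝ)
    (hR1 : ∀ X Y Z W : V, R X Y Z W = - R Y X Z W)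
    (hR2 : ∀ X Y Z W : V, R X Y Z W = - R X Y W Z)
    (hR3 : ∀ X Y Z W : V, R X Y Z W = R Z W X Y)
    (hB : ∀ X Y Z W : V, R X Y Z W + R Y Z X W + R Z X Y W = 0)
    (J : V → V → V)
    (hJ : ∀ X Y Z : V, ⟪J X Y, Z⟫ = R Y X X Z)
    (hJO : ∀ X Y : V, ⟪X, Y⟫ = 0 → ⟪J X Y, J Y X⟫ = 0) :
    ∀ X Y : V, ‖X‖ = 1 → ‖Y‖ = 1 → ⟪X, Y⟫ = 0 →
      ∀ lam : ℝ, J X Y = lam • Y → J Y X = lam • X := by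
  intro X Y hX hY hXY lam hlam
  set W := J Y X with hW
  have hXX1 : ⟪X, X⟫ = (1:ℝ) := by
    rw [real_inner_self_eq_norm_mul_norm, hX]; norm_num
  have hYY1 : ⟪Y, Y⟫ = (1:ℝ) := by
    rw [real_inner_self_eq_norm_mul_norm, hY]; norm_num
  -- basic curvature facts
  have hXXz : ∀ a b : V, R X X a b = 0 := by
    intro a b; have := hR1 X X a b; linarith
  have hYYz : ∀ a b : V, R Y Y a b = 0 := by
    intro a b; have := hR1 Y Y a b; linarith
  have hRYXX : ∀ Z : V, R Y X X Z = lam * ⟪Y, Z⟫ := by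
    intro Z
    rw [← hJ, hlam, real_inner_smul_left]
  have hRXYY : ∀ Z : V, R X Y Y Z = ⟪W, Z⟫ := by
    intro Z; rw [hW, hJ]
  have hRXYX : ∀ Z : V, R X Y X Z = -(lam * ⟪Y, Z⟫) := by
    intro Z; rw [hR1, hRYXX]
  have hRYXY : ∀ Z : V, R Y X Y Z = -⟪W, Z⟫ := by
    intro Z; rw [hR1, hRXYY]
  -- expansions of the Jacobi operator at rotated vectors A = X+Y, B = Y−X
  have hRBAA : ∀ Z : V, R (Y - X) (X + Y) (X + Y) Z
      = 2 * (lam * ⟪Y, Z⟫) - 2 * ⟪W, Z⟫ := by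
    intro Z
    rw [hR1 (Y - X)]
    simp only [map_add, map_sub, LinearMap.add_apply, LinearMap.sub_apply,
      hXXz, hYYz, hRYXX, hRXYY, hRXYX, hRYXY]
    ring
  have hRABB : ∀ Z : V, R (X + Y) (Y - X) (Y - X) Z
      = 2 * ⟪W, Z⟫ + 2 * (lam * ⟪Y, Z⟫) := by
    intro Z
    simp only [map_add, map_sub, LinearMap.add_apply, LinearMap.sub_apply,
      hXXz, hYYz, hRYXX, hRXYY, hRXYX, hRYXY]
    ring
  have hYX : ⟪Y, X⟫ = (0:ℝ) := by rw [real_inner_comm]; exact hXY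
  have horth : ⟪X + Y, Y - X⟫ = (0:ℝ) := by
    rw [inner_add_left, inner_sub_right, inner_sub_right]
    rw [hXX1, hYY1, hXY, hYX]
    ring
  have key : ⟪J (X + Y) (Y - X), J (Y - X) (X + Y)⟫ = (0:ℝ) := hJO _ _ horth
  have hWY : ⟪W, Y⟫ = (0:ℝ) := by
    have h1 : ⟪W, Y⟫ = R X Y Y Y := hRXYY Y ▸ rfl
    have h2 := hR2 X Y Y Y
    rw [h1]; linarith
  have hWX : ⟪W, X⟫ = lam := by
    have h1 : ⟪W, X⟫ = R X Y Y X := (hRXYY X).symm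
    rw [h1, hR3, hRYXX, hYY1]; ring
  -- compute the key inner product
  have hJBA_Y : ⟪Y, J (Y - X) (X + Y)⟫ = 2 * lam := by
    rw [real_inner_comm, hJ, hRABB, hWY, hYY1]; ring
  have hYW : ⟪Y, W⟫ = (0:ℝ) := by rw [real_inner_comm]; exact hWY
  have hJBA_W : ⟪W, J (Y - X) (X + Y)⟫ = 2 * ⟪W, W⟫ := by
    rw [real_inner_comm, hJ, hRABB, hYW]; ring
  have hWW : ⟪W, W⟫ = lam * lam := by
    rw [hJ, hRBAA, hJBA_Y, hJBA_W] at key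
    linarith
  have hXW : ⟪X, W⟫ = lam := by rw [real_inner_comm]; exact hWX
  -- conclude W = lam • X
  have hzero : ⟪W - lam • X, W - lam • X⟫ = (0:ℝ) := by
    rw [inner_sub_left, inner_sub_right, inner_sub_right,
      real_inner_smul_left, real_inner_smul_left, real_inner_smul_right,
      real_inner_smul_right, hWW, hWX, hXW, hXX1]
    ring
  have := inner_self_eq_zero.mp hzero
  rw [sub_eq_zero] at this
  exact this
end

section
/- Any Jacobi-dual algebraic curvature tensor is Einstein: the Ricci operator Ric^♯ = Σ_i J_{E_i} (sum over an orthonormal basis) is a scalar multiple of the identity. -/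
open RealInnerProductSpace

lemma sum_bilin_onb_indep {V : Type*} [NormedAddCommGroup V] [InnerProductSpace ℝ V]
    (φ : V →ₗ[ℝ] V →ₗ[ℝ] ℝ) {n m : ℕ}
    (b : OrthonormalBasis (Fin n) ℝ V) (e : OrthonormalBasis (Fin m) ℝ V) :
    ∑ i, φ (b i) (b i) = ∑ j, φ (e j) (e j) := by
  have h1 : ∀ x y : V, φ x y = ∑ j, ⟪e j, x⟫ * φ (e j) y := by
    intro x y
    conv_lhs => rw [← e.sum_repr' x]
    rw [map_sum, LinearMap.sum_apply]
    simp [smul_eq_mul]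
  have h2 : ∀ x y : V, φ x y = ∑ k, ⟪e k, y⟫ * φ x (e k) := by
    intro x y
    conv_lhs => rw [← e.sum_repr' y]
    rw [map_sum]
    simp [smul_eq_mul]
  have step : ∀ i, φ (b i) (b i)
      = ∑ j, ∑ k, ⟪e j, b i⟫ * (⟪e k, b i⟫ * φ (e j) (e k)) := by
    intro i
    rw [h1 (b i) (b i)]
    refine Finset.sum_congr rfl fun j _ => ?_
    rw [h2 (e j) (b i), Finset.mul_sum]
  calc ∑ i, φ (b i) (b i)
      = ∑ i, ∑ j, ∑ k, ⟪e j, b i⟫ * (⟪e k, b i⟫ * φ (e j) (e k)) :=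
        Finset.sum_congr rfl fun i _ => step i
    _ = ∑ j, ∑ k, ∑ i, ⟪e j, b i⟫ * (⟪e k, b i⟫ * φ (e j) (e k)) := by
        rw [Finset.sum_comm]
        exact Finset.sum_congr rfl fun j _ => Finset.sum_comm
    _ = ∑ j, ∑ k, (⟪e j, e k⟫ : ℝ) * φ (e j) (e k) := by
        refine Finset.sum_congr rfl fun j _ => Finset.sum_congr rfl fun k _ => ?_
        rw [← b.sum_inner_mul_inner (e j) (e k), Finset.sum_mul]
        refine Finset.sum_congr rfl fun i _ => ?_
        rw [real_inner_comm (b i) (e k), mul_assoc]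
    _ = ∑ j, φ (e j) (e j) := by
        refine Finset.sum_congr rfl fun j _ => ?_
        rw [Finset.sum_eq_single j]
        · rw [orthonormal_iff_ite.mp e.orthonormal, if_pos rfl, one_mul]
        · intro k _ hk
          rw [orthonormal_iff_ite.mp e.orthonormal, if_neg hk.symm, zero_mul]
        · intro h; exact absurd (Finset.mem_univ j) h

open RealInnerProductSpace

theorem jacobi_dual_implies_einstein {V : Type*} [NormedAddCommGroup V] [InnerProductSpace ℝ V] [FiniteDimensional ℝ V]
    (R : V →ₗ[ℝ] V →ₗ[ℝ] V →ₗ[ℝ] V →ₗ[ℝ] ℝ)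
    (hR1 : ∀ X Y Z W : V, R X Y Z W = - R Y X Z W)
    (hR2 : ∀ X Y Z W : V, R X Y Z W = - R X Y W Z)
    (hR3 : ∀ X Y Z W : V, R X Y Z W = R Z W X Y)
    (hB : ∀ X Y Z W : V, R X Y Z W + R Y Z X W + R Z X Y W = 0)
    (J : V → V → V)
    (hJ : ∀ X Y Z : V, ⟪J X Y, Z⟫ = R Y X X Z)
    (hJD : ∀ X Y : V, ‖X‖ = 1 → ‖Y‖ = 1 → ⟪X, Y⟫ = 0 →
      ∀ lam : ℝ, J X Y = lam • Y → J Y X = lam • X)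
    (n : ℕ) (b : OrthonormalBasis (Fin n) ℝ V) :
    ∃ c : ℝ, ∀ X : V, ∑ i, J (b i) X = c • X := by
  classical
  -- symmetry of the Jacobi-type expression
  have hJsymm : ∀ X Y Z : V, R Y X X Z = R Z X X Y := by
    intro X Y Z
    calc R Y X X Z = R X Z Y X := hR3 Y X X Z
      _ = - R Z X Y X := hR1 X Z Y X
      _ = - - R Z X X Y := by rw [← hR2 Z X Y X]
      _ = R Z X X Y := neg_neg _
  have hRXX : ∀ X Z : V, R X X X Z = 0 := by
    intro X Z
    have := hR1 X X X Z
    linarith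
  have hRYXXX : ∀ Y X : V, R Y X X X = 0 := by
    intro Y X
    have := hR2 Y X X X
    linarith
  -- linearity of J Y in the second argument
  have hJadd : ∀ Y X X' : V, J Y (X + X') = J Y X + J Y X' := by
    intro Y X X'
    apply ext_inner_right ℝ
    intro Z
    rw [hJ, inner_add_left, hJ, hJ]
    simp
  have hJzero : ∀ Y : V, J Y (0 : V) = 0 := by
    intro Y
    apply ext_inner_right ℝ
    intro Z
    rw [hJ]
    simp
  have hJsmul : ∀ (a : ℝ) (Y X : V), J Y (a • X) = a • J Y X := by
    intro a Y X
    apply ext_inner_right ℝ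
    intro Z
    rw [hJ, inner_smul_left, hJ]
    simp
  set Ric : V → V := fun X => ∑ i, J (b i) X with hRic
  have hRadd : ∀ X X' : V, Ric (X + X') = Ric X + Ric X' := by
    intro X X'
    simp only [hRic, hJadd, Finset.sum_add_distrib]
  have hRsmul : ∀ (a : ℝ) (X : V), Ric (a • X) = a • Ric X := by
    intro a X
    simp only [hRic, hJsmul, Finset.smul_sum]
  -- key step: unit vectors are eigenvectors of Ric
  have key : ∀ X : V, ‖X‖ = 1 → ∃ c : ℝ, Ric X = c • X := by
    intro X hX
    have hX0 : X ≠ 0 := by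
      intro h; rw [h, norm_zero] at hX; norm_num at hX
    set K : Submodule ℝ V := (ℝ ∙ X)ᗮ with hKdef
    -- J X as a linear map
    let T : V →ₗ[ℝ] V :=
      { toFun := J X
        map_add' := by
          intro u v
          apply ext_inner_right ℝ
          intro Z
          rw [hJ, inner_add_left, hJ, hJ]
          simp
        map_smul' := by
          intro a u
          apply ext_inner_right ℝ
          intro Z
          rw [hJ, inner_smul_left, hJ]
          simp }
    have hTapp : ∀ Y, T Y = J X Y := fun _ => rfl
    have hTmem : ∀ v ∈ K, T v ∈ K := by
      intro v hv
      rw [hKdef, Submodule.mem_orthogonal_singleton_iff_inner_right]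
      rw [real_inner_comm, hTapp, hJ]
      exact hRYXXX v X
    let S : K →ₗ[ℝ] K := T.restrict hTmem
    have hScoe : ∀ u : K, (S u : V) = T (u : V) := fun u => rfl
    have hS : S.IsSymmetric := by
      intro u v
      rw [Submodule.coe_inner, Submodule.coe_inner, hScoe, hScoe, hTapp, hTapp, hJ,
        real_inner_comm, hJ]
      exact hJsymm X u v
    set m := Module.finrank ℝ K with hm
    let F : OrthonormalBasis (Fin m) ℝ K := hS.eigenvectorBasis rfl
    let lam : Fin m → ℝ := hS.eigenvalues rfl
    have hF : ∀ j, S (F j) = lam j • F j := fun j => hS.apply_eigenvectorBasis rfl j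
    have hFnorm : ∀ j, ‖(F j : V)‖ = 1 := by
      intro j
      rw [← Submodule.coe_norm]
      exact F.orthonormal.1 j
    have hFX : ∀ j, ⟪X, (F j : V)⟫ = 0 := by
      intro j
      exact Submodule.mem_orthogonal_singleton_iff_inner_right.mp (F j).2
    have hdual : ∀ j, J (F j : V) X = lam j • X := by
      intro j
      refine hJD X (F j) hX (hFnorm j) (hFX j) (lam j) ?_
      have h1 : (S (F j) : V) = lam j • (F j : V) := by
        rw [hF j]; rfl
      rw [hScoe, hTapp] at h1
      exact h1
    -- adapted orthonormal basis
    let e : Fin (m + 1) → V := Fin.cons X fun j => (F j : V)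
    have he0 : e 0 = X := rfl
    have heS : ∀ j : Fin m, e j.succ = (F j : V) := fun j => rfl
    have hon : Orthonormal ℝ e := by
      rw [orthonormal_iff_ite]
      intro i j
      induction i using Fin.cases with
      | zero =>
        induction j using Fin.cases with
        | zero => rw [he0, if_pos rfl, real_inner_self_eq_norm_sq, hX]; norm_num
        | succ j' => rw [he0, heS, hFX j', if_neg (Fin.succ_ne_zero j').symm]
      | succ i' =>
        induction j using Fin.cases with
        | zero => rw [he0, heS, real_inner_comm, hFX i', if_neg (Fin.succ_ne_zero i')]
        | succ j' =>
          rw [heS, heS, ← Submodule.coe_inner]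
          rw [orthonormal_iff_ite.mp F.orthonormal i' j']
          simp [Fin.succ_inj]
    have hcard : Fintype.card (Fin (m + 1)) = Module.finrank ℝ V := by
      have h1 : Module.finrank ℝ (ℝ ∙ X) = 1 := finrank_span_singleton hX0
      have h2 := Submodule.finrank_add_finrank_orthogonal (ℝ ∙ X : Submodule ℝ V)
      rw [h1, ← hKdef] at h2
      simp only [Fintype.card_fin]
      omega
    have hsp : ⊤ ≤ Submodule.span ℝ (Set.range e) := by
      rw [hon.linearIndependent.span_eq_top_of_card_eq_finrank hcard]
    let E : OrthonormalBasis (Fin (m + 1)) ℝ V := OrthonormalBasis.mk hon hsp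
    have hE : ∀ i, E i = e i := fun i => by rw [OrthonormalBasis.coe_mk]
    refine ⟨∑ j, lam j, ?_⟩
    apply ext_inner_right ℝ
    intro Z
    -- the bilinear form φ U W = R X U W Z
    let φ : V →ₗ[ℝ] V →ₗ[ℝ] ℝ := LinearMap.mk₂ ℝ (fun U W => R X U W Z)
      (by intro u u' w; simp) (by intro a u w; simp)
      (by intro u w w'; simp) (by intro a u w; simp)
    have hφ : ∀ U W, φ U W = R X U W Z := fun _ _ => rfl
    calc ⟪Ric X, Z⟫
        = ∑ i, φ (b i) (b i) := by
          rw [hRic, sum_inner]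
          refine Finset.sum_congr rfl fun i _ => ?_
          rw [hJ, hφ]
      _ = ∑ j, φ (E j) (E j) := sum_bilin_onb_indep φ b E
      _ = φ (e 0) (e 0) + ∑ j : Fin m, φ (e j.succ) (e j.succ) := by
          simp_rw [hE]
          exact Fin.sum_univ_succ _
      _ = ∑ j : Fin m, ⟪J (F j : V) X, Z⟫ := by
          rw [he0, hφ, hRXX, zero_add]
          refine Finset.sum_congr rfl fun j _ => ?_
          rw [heS, hφ, hJ]
      _ = ⟪(∑ j, lam j) • X, Z⟫ := by
          simp_rw [hdual]
          rw [← sum_inner, ← Finset.sum_smul]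
  -- every vector is an eigenvector
  have hquad : ∀ X : V, ∃ c : ℝ, Ric X = c • X := by
    intro X
    by_cases hX : X = 0
    · refine ⟨0, ?_⟩
      simp [hRic, hX, hJzero]
    · obtain ⟨c, hc⟩ := key (‖X‖⁻¹ • X) (norm_smul_inv_norm hX)
      refine ⟨c, ?_⟩
      have hXrw : X = ‖X‖ • (‖X‖⁻¹ • X) := by
        rw [smul_smul, mul_inv_cancel₀ (norm_ne_zero_iff.mpr hX), one_smul]
      calc Ric X = Ric (‖X‖ • (‖X‖⁻¹ • X)) := by rw [← hXrw]
        _ = ‖X‖ • Ric (‖X‖⁻¹ • X) := hRsmul _ _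
        _ = ‖X‖ • (c • (‖X‖⁻¹ • X)) := by rw [hc]
        _ = c • (‖X‖ • (‖X‖⁻¹ • X)) := smul_comm _ _ _
        _ = c • X := by rw [← hXrw]
  -- a linear map for which every vector is an eigenvector is scalar
  by_cases htriv : ∀ X : V, X = 0
  · refine ⟨0, fun X => ?_⟩
    rw [htriv X]
    simp [hRic, hJzero]
  · push_neg at htriv
    obtain ⟨X₀, hX₀⟩ := htriv
    obtain ⟨c, hc⟩ := hquad X₀
    refine ⟨c, fun X => ?_⟩
    show Ric X = c • X
    by_cases hmem : X ∈ (ℝ ∙ X₀ : Submodule ℝ V)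
    · obtain ⟨a, ha⟩ := Submodule.mem_span_singleton.mp hmem
      rw [← ha, hRsmul, hc, smul_comm]
    · obtain ⟨cX, hcX⟩ := hquad X
      obtain ⟨cS, hcS⟩ := hquad (X + X₀)
      rw [hRadd, hcX, hc, smul_add] at hcS
      have hkey : (cX - cS) • X = (cS - c) • X₀ := by
        rw [sub_smul, sub_smul]
        have := hcS
        abel_nf
        abel_nf at this
        linear_combination (norm := module) this
      have hcXcS : cX = cS := by
        by_contra hne
        apply hmem
        have : X = (cX - cS)⁻¹ • ((cS - c) • X₀) := by
          rw [← hkey, smul_smul, inv_mul_cancel₀ (sub_ne_zero.mpr hne), one_smul]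
        rw [this]
        exact Submodule.smul_mem _ _ (Submodule.smul_mem _ _ (Submodule.mem_span_singleton_self X₀))
      have hcSc : cS = c := by
        rw [hcXcS, sub_self, zero_smul] at hkey
        have := hkey.symm
        rw [smul_eq_zero] at this
        rcases this with h | h
        · linarith [sub_eq_zero.mp (by linarith [h] : cS - c = 0)]
        · exact absurd h hX₀
      rw [hcX, hcXcS, hcSc]
end

section
/- For any Jacobi-dual algebraic curvature tensor and any unit vector E, E is an eigenvector of the Ricci operator Ric^♯ with eigenvalue equal to the trace of J_E. -/
open RealInnerProductSpace

private lemma sum_bilin_basis_indep {V : Type*} [NormedAddCommGroup V] [InnerProductSpace ℝ V]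
    {ι κ : Type*} [Fintype ι] [Fintype κ]
    (b : OrthonormalBasis ι ℝ V) (c : OrthonormalBasis κ ℝ V) (B : V →ₗ[ℝ] V →ₗ[ℝ] ℝ) :
    ∑ i, B (b i) (b i) = ∑ j, B (c j) (c j) := by
  classical
  have key : ∀ i, B (b i) (b i) = ∑ j, ∑ k, ⟪c j, b i⟫ * ⟪c k, b i⟫ * B (c j) (c k) := by
    intro i
    conv_lhs => rw [← c.sum_repr' (b i)]
    simp only [map_sum, map_smul, LinearMap.sum_apply, LinearMap.smul_apply, smul_eq_mul,
      Finset.mul_sum]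
    rw [Finset.sum_comm]
    exact Finset.sum_congr rfl fun j _ => Finset.sum_congr rfl fun k _ => by ring
  calc ∑ i, B (b i) (b i)
      = ∑ i, ∑ j, ∑ k, ⟪c j, b i⟫ * ⟪c k, b i⟫ * B (c j) (c k) := by
        exact Finset.sum_congr rfl fun i _ => key i
    _ = ∑ j, ∑ k, (∑ i, ⟪c j, b i⟫ * ⟪b i, c k⟫) * B (c j) (c k) := by
        rw [Finset.sum_comm]
        refine Finset.sum_congr rfl fun j _ => ?_
        rw [Finset.sum_comm]
        refine Finset.sum_congr rfl fun k _ => ?_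
        rw [Finset.sum_mul]
        refine Finset.sum_congr rfl fun i _ => ?_
        rw [real_inner_comm (c k) (b i)]
    _ = ∑ j, B (c j) (c j) := by
        refine Finset.sum_congr rfl fun j _ => ?_
        rw [Finset.sum_eq_single j]
        · rw [b.sum_inner_mul_inner, real_inner_self_eq_norm_sq, c.orthonormal.1 j]
          norm_num
        · intro k _ hk
          rw [b.sum_inner_mul_inner, c.orthonormal.2 (Ne.symm hk)]
          ring
        · intro h; exact absurd (Finset.mem_univ j) h

theorem jacobi_dual_ricci_eigenvector {V : Type*} [NormedAddCommGroup V] [InnerProductSpace ℝ V] [FiniteDimensional ℝ V]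
    (R : V →ₗ[ℝ] V →ₗ[ℝ] V →ₗ[ℝ] V →ₗ[ℝ] ℝ)
    (hR1 : ∀ X Y Z W : V, R X Y Z W = - R Y X Z W)
    (hR2 : ∀ X Y Z W : V, R X Y Z W = - R X Y W Z)
    (hR3 : ∀ X Y Z W : V, R X Y Z W = R Z W X Y)
    (hB : ∀ X Y Z W : V, R X Y Z W + R Y Z X W + R Z X Y W = 0)
    (J : V → V → V)
    (hJ : ∀ X Y Z : V, ⟪J X Y, Z⟫ = R Y X X Z)
    (hJD : ∀ X Y : V, ‖X‖ = 1 → ‖Y‖ = 1 → ⟪X, Y⟫ = 0 →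
      ∀ lam : ℝ, J X Y = lam • Y → J Y X = lam • X)
    (n : ℕ) (b : OrthonormalBasis (Fin n) ℝ V) :
    ∀ E : V, ‖E‖ = 1 → ∑ i, J (b i) E = (∑ i, ⟪J E (b i), b i⟫) • E := by
  classical
  intro E hE
  have hEne : E ≠ 0 := by intro h; rw [h, norm_zero] at hE; norm_num at hE
  -- symmetry of the form Y,Z ↦ R Y E E Z
  have hsym : ∀ Y Z : V, R Y E E Z = R Z E E Y := by
    intro Y Z
    have h1 := hR3 Y E E Z
    have h2 := hR1 E Z Y E
    have h3 := hR2 Z E Y E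
    linarith
  have hREEE : ∀ Y : V, R Y E E E = 0 := by
    intro Y; have := hR2 Y E E E; linarith
  have hREE0 : ∀ Z W : V, R E E Z W = 0 := by
    intro Z W; have := hR1 E E Z W; linarith
  -- linear map A = J E
  have hJEadd : ∀ x y : V, J E (x + y) = J E x + J E y := by
    intro x y
    apply ext_inner_right ℝ
    intro Z
    rw [inner_add_left, hJ, hJ, hJ]
    simp [map_add]
  have hJEsmul : ∀ (r : ℝ) (x : V), J E (r • x) = r • J E x := by
    intro r x
    apply ext_inner_right ℝ
    intro Z
    rw [real_inner_smul_left, hJ, hJ]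
    simp [map_smul]
  set A : V →ₗ[ℝ] V := { toFun := J E, map_add' := hJEadd, map_smul' := hJEsmul } with hA
  have hAapp : ∀ x : V, A x = J E x := fun _ => rfl
  set U : Submodule ℝ V := (ℝ ∙ E)ᗮ with hU
  have hAU : ∀ x ∈ U, A x ∈ U := by
    intro x _
    rw [hU, Submodule.mem_orthogonal_singleton_iff_inner_right]
    rw [real_inner_comm, hAapp, hJ]
    exact hREEE x
  set T : U →ₗ[ℝ] U := A.restrict hAU with hT
  have hTcoe : ∀ x : U, (T x : V) = A (x : V) := fun _ => rfl
  have hTsym : T.IsSymmetric := by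
    intro x y
    have h1 : ⟪((T x : V)), ((y : V))⟫ = R ((x : V)) E E ((y : V)) := by
      rw [hTcoe, hAapp]; exact hJ E _ _
    have h2 : ⟪((x : V)), ((T y : V))⟫ = R ((y : V)) E E ((x : V)) := by
      rw [real_inner_comm, hTcoe, hAapp]; exact hJ E _ _
    rw [Submodule.coe_inner, Submodule.coe_inner, h1, h2]
    exact hsym _ _
  set m := Module.finrank ℝ U with hm
  set f := hTsym.eigenvectorBasis hm.symm with hf
  set lam := hTsym.eigenvalues hm.symm with hlam
  have hAf : ∀ j, A ((f j : V)) = lam j • (f j : V) := by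
    intro j
    have h2 := congrArg (Subtype.val) (hTsym.apply_eigenvectorBasis hm.symm j)
    simp only [Submodule.coe_smul] at h2
    exact h2
  have hfnorm : ∀ j, ‖(f j : V)‖ = 1 := by
    intro j
    have := f.orthonormal.1 j
    exact this
  have hfperp : ∀ j, ⟪E, (f j : V)⟫ = 0 := by
    intro j
    exact Submodule.mem_orthogonal_singleton_iff_inner_right.mp (f j).2
  have hJdual : ∀ j, J ((f j : V)) E = lam j • E := by
    intro j
    exact hJD E (f j) hE (hfnorm j) (hfperp j) (lam j) ((hAapp _).symm.trans (hAf j))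
  -- combined orthonormal basis
  set g : Option (Fin m) → V := fun o => o.elim E (fun j => (f j : V)) with hg
  have hgon : Orthonormal ℝ g := by
    constructor
    · intro o
      cases o with
      | none => simpa [hg] using hE
      | some j => simpa [hg] using hfnorm j
    · intro o o' hne
      cases o with
      | none =>
        cases o' with
        | none => exact absurd rfl hne
        | some j => simpa [hg] using hfperp j
      | some j =>
        cases o' with
        | none => simpa [hg, real_inner_comm] using hfperp j
        | some k =>
          have hjk : j ≠ k := fun h => hne (by rw [h])
          have := f.orthonormal.2 hjk
          simpa [hg, Submodule.coe_inner] using this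
  have hcard : Fintype.card (Option (Fin m)) = Module.finrank ℝ V := by
    have h1 : Module.finrank ℝ (ℝ ∙ E) = 1 := finrank_span_singleton hEne
    have h2 : Module.finrank ℝ (ℝ ∙ E) + m = Module.finrank ℝ V :=
      Submodule.finrank_add_finrank_orthogonal (ℝ ∙ E)
    simp only [Fintype.card_option, Fintype.card_fin]
    omega
  set c : OrthonormalBasis (Option (Fin m)) ℝ V :=
    (basisOfOrthonormalOfCardEqFinrank hgon hcard).toOrthonormalBasis
      (by rwa [coe_basisOfOrthonormalOfCardEqFinrank]) with hc
  have hcapp : ∀ o, c o = g o := by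
    intro o
    rw [hc, Module.Basis.coe_toOrthonormalBasis, coe_basisOfOrthonormalOfCardEqFinrank]
  -- the two bilinear forms
  have hBsum2 : ∑ i, ⟪J E (b i), b i⟫ = ∑ j, lam j := by
    set B2 : V →ₗ[ℝ] V →ₗ[ℝ] ℝ := LinearMap.mk₂ ℝ (fun X W => R X E E W)
      (by intro x y z; simp [map_add])
      (by intro r x y; simp [map_smul])
      (by intro x y z; simp [map_add])
      (by intro r x y; simp [map_smul]) with hB2
    have e1 : ∑ i, ⟪J E (b i), b i⟫ = ∑ i, B2 (b i) (b i) := by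
      refine Finset.sum_congr rfl fun i _ => ?_
      rw [hJ]; rfl
    rw [e1, sum_bilin_basis_indep b c B2]
    rw [Fintype.sum_option]
    have hnone : B2 (c none) (c none) = 0 := by
      rw [hcapp]; simp only [hg, Option.elim]
      show R E E E E = 0
      exact hREE0 E E
    rw [hnone, zero_add]
    refine Finset.sum_congr rfl fun j _ => ?_
    rw [hcapp]
    show R ((f j : V)) E E ((f j : V)) = lam j
    rw [← hJ E]
    rw [show J E ((f j : V)) = lam j • (f j : V) from (hAapp _).symm.trans (hAf j)]
    rw [real_inner_smul_left, real_inner_self_eq_norm_sq, hfnorm j]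
    norm_num
  -- main equality via inner products
  apply ext_inner_right ℝ
  intro Z
  rw [sum_inner, real_inner_smul_left, hBsum2]
  set B1 : V →ₗ[ℝ] V →ₗ[ℝ] ℝ := LinearMap.mk₂ ℝ (fun X W => R E X W Z)
    (by intro x y z; simp [map_add])
    (by intro r x y; simp [map_smul])
    (by intro x y z; simp [map_add])
    (by intro r x y; simp [map_smul]) with hB1
  have e2 : ∑ i, ⟪J (b i) E, Z⟫ = ∑ i, B1 (b i) (b i) := by
    refine Finset.sum_congr rfl fun i _ => ?_
    rw [hJ]; rfl
  rw [e2, sum_bilin_basis_indep b c B1, Fintype.sum_option]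
  have hnone : B1 (c none) (c none) = 0 := by
    rw [hcapp]; simp only [hg, Option.elim]
    show R E E E Z = 0
    exact hREE0 E Z
  rw [hnone, zero_add, Finset.sum_mul]
  refine Finset.sum_congr rfl fun j _ => ?_
  rw [hcapp]
  show R E ((f j : V)) ((f j : V)) Z = lam j * ⟪E, Z⟫
  rw [← hJ ((f j : V)) E Z, hJdual j, real_inner_smul_left]
end

section
/- Any Clifford algebraic curvature tensor R = μ₀ R^1 + Σ_{i=1}^m μ_i R^{J_i}, where (J_1,…,J_m) is an anti-commuting family of skew-adjoint complex structures satisfying the Hurwitz relations J_i J_j + J_j J_i = −2δ_{ij} id, is Jacobi-orthogonal: g(J_X Y, J_Y X) = 0 for all X ⊥ Y. -/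
open RealInnerProductSpace

theorem clifford_is_jacobi_orthogonal {V : Type*} [NormedAddCommGroup V] [InnerProductSpace ℝ V] [FiniteDimensional ℝ V]
    (m : ℕ) (Js : Fin m → V →ₗ[ℝ] V) (μ₀ : ℝ) (μ : Fin m → ℝ)
    (hskew : ∀ i, ∀ X Y : V, ⟪Js i X, Y⟫ = -⟪X, Js i Y⟫)
    (hHur : ∀ i j, Js i ∘ₗ Js j + Js j ∘ₗ Js i =
      if i = j then (-2 : ℝ) • LinearMap.id else 0)
    (R : V → V → V → V → ℝ)
    (hR : ∀ X Y Z W : V, R X Y Z W =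
      μ₀ * (⟪X, Z⟫ * ⟪Y, W⟫ - ⟪Y, Z⟫ * ⟪X, W⟫) +
      ∑ i, μ i * (⟪Js i X, Z⟫ * ⟪Js i Y, W⟫ - ⟪Js i Y, Z⟫ * ⟪Js i X, W⟫
        + 2 * ⟪Js i X, Y⟫ * ⟪Js i Z, W⟫))
    (J : V → V → V)
    (hJ : ∀ X Y Z : V, ⟪J X Y, Z⟫ = R Y X X Z) :
    ∀ X Y : V, ⟪X, Y⟫ = 0 → ⟪J X Y, J Y X⟫ = 0 := by
  intro X Y hXY
  have hYX : ⟪Y, X⟫ = 0 := by rw [real_inner_comm]; exact hXY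
  -- ⟪Js i Z, Z⟫ = 0
  have hskew0 : ∀ i (Z : V), ⟪Js i Z, Z⟫ = 0 := by
    intro i Z
    have h1 := hskew i Z Z
    have h2 := real_inner_comm Z (Js i Z)
    linarith
  have hskew0' : ∀ i (Z : V), ⟪Z, Js i Z⟫ = 0 := by
    intro i Z
    rw [real_inner_comm]; exact hskew0 i Z
  have hskewYX : ∀ i, ⟪Js i Y, X⟫ = -⟪Js i X, Y⟫ := by
    intro i
    rw [hskew i Y X, real_inner_comm]
  -- antisymmetry: ⟪Js i X, Js j Y⟫ + ⟪Js j X, Js i Y⟫ = 0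
  have hC : ∀ i j, ⟪Js i X, Js j Y⟫ + ⟪Js j X, Js i Y⟫ = 0 := by
    intro i j
    have happ := congrArg (fun L : V →ₗ[ℝ] V => L Y) (hHur i j)
    simp only [LinearMap.add_apply, LinearMap.comp_apply] at happ
    have e1 : ⟪Js i X, Js j Y⟫ = -⟪X, Js i (Js j Y)⟫ := hskew i X (Js j Y)
    have e2 : ⟪Js j X, Js i Y⟫ = -⟪X, Js j (Js i Y)⟫ := hskew j X (Js i Y)
    have e3 : ⟪X, Js i (Js j Y)⟫ + ⟪X, Js j (Js i Y)⟫
        = ⟪X, Js i (Js j Y) + Js j (Js i Y)⟫ := (inner_add_right _ _ _).symm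
    rw [e1, e2]
    rw [happ] at e3
    by_cases h : i = j
    · subst h
      simp only [if_true, LinearMap.smul_apply, LinearMap.id_apply,
        real_inner_smul_right, hXY, mul_zero] at e3
      linarith
    · simp only [if_neg h, LinearMap.zero_apply, inner_zero_right] at e3
      linarith
  -- ⟪Y, J Y X⟫ = 0
  have hB : ⟪Y, J Y X⟫ = 0 := by
    rw [real_inner_comm, hJ, hR]
    simp [hXY, hskew0]
  -- ⟪Js i X, J Y X⟫ expanded
  have hA : ∀ i, ⟪Js i X, J Y X⟫
      = ∑ j, 3 * (μ j * (⟪Js j X, Y⟫ * ⟪Js i X, Js j Y⟫)) := by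
    intro i
    rw [real_inner_comm, hJ, hR]
    simp only [hXY, hskew0, hskew0', zero_mul, mul_zero, sub_zero, zero_sub,
      neg_zero, zero_add, add_zero]
    apply Finset.sum_congr rfl
    intro j _
    rw [real_inner_comm (Js j Y) (Js i X)]
    ring
  -- main expansion
  have main : ⟪J X Y, J Y X⟫
      = ∑ i, (-3 * (μ i * ⟪Js i X, Y⟫)) * ⟪Js i X, J Y X⟫ := by
    rw [hJ, hR, hYX, hB]
    simp only [hskewYX, hskew0, zero_mul, mul_zero, sub_zero, zero_add, add_zero]
    apply Finset.sum_congr rfl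
    intro i _
    ring
  have main2 : ⟪J X Y, J Y X⟫
      = ∑ i, ∑ j, (-3 * (μ i * ⟪Js i X, Y⟫))
          * (3 * (μ j * (⟪Js j X, Y⟫ * ⟪Js i X, Js j Y⟫))) := by
    rw [main]
    apply Finset.sum_congr rfl
    intro i _
    rw [hA i, Finset.mul_sum]
  rw [main2]
  -- antisymmetric double sum vanishes
  have key : ∀ (F : Fin m → Fin m → ℝ), (∀ i j, F i j + F j i = 0) →
      ∑ i, ∑ j, F i j = 0 := by
    intro F hF
    have h1 : (∑ i, ∑ j, F i j) + (∑ i, ∑ j, F j i) = 0 := by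
      rw [← Finset.sum_add_distrib]
      have : ∀ i ∈ Finset.univ, ((∑ j, F i j) + ∑ j, F j i) = 0 := by
        intro i _
        rw [← Finset.sum_add_distrib]
        exact Finset.sum_eq_zero fun j _ => hF i j
      rw [Finset.sum_congr rfl this, Finset.sum_const, smul_zero]
    have h2 : (∑ i : Fin m, ∑ j : Fin m, F j i) = ∑ i, ∑ j, F i j :=
      Finset.sum_comm
    linarith
  apply key
  intro i j
  linear_combination (-9 * μ i * ⟪Js i X, Y⟫ * μ j * ⟪Js j X, Y⟫) * hC i j
end

section
/- Any two-root Osserman algebraic curvature tensor is Jacobi-orthogonal: if R is Jacobi-dual and there exist distinct λ₁, λ₂ ∈ ℝ such that for every nonzero Y, V = span{Y} ⊕ V₁(Y) ⊕ V₂(Y) where V_i(Y) = ker(J_Y − ‖Y‖² λ_i id) ∩ Y^⊥, then g(J_X Y, J_Y X) = 0 for all X ⊥ Y. -/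
open RealInnerProductSpace

theorem two_root_osserman_is_jacobi_orthogonal {V : Type*} [NormedAddCommGroup V] [InnerProductSpace ℝ V] [FiniteDimensional ℝ V]
    (R : V →ₗ[ℝ] V →ₗ[ℝ] V →ₗ[ℝ] V →ₗ[ℝ] ℝ)
    (hR1 : ∀ X Y Z W : V, R X Y Z W = - R Y X Z W)
    (hR2 : ∀ X Y Z W : V, R X Y Z W = - R X Y W Z)
    (hR3 : ∀ X Y Z W : V, R X Y Z W = R Z W X Y)
    (hB : ∀ X Y Z W : V, R X Y Z W + R Y Z X W + R Z X Y W = 0)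
    (J : V → V → V)
    (hJ : ∀ X Y Z : V, ⟪J X Y, Z⟫ = R Y X X Z)
    (hJD : ∀ X Y : V, ‖X‖ = 1 → ‖Y‖ = 1 → ⟪X, Y⟫ = 0 →
      ∀ lam : ℝ, J X Y = lam • Y → J Y X = lam • X)
    (lam₁ lam₂ : ℝ) (hlam : lam₁ ≠ lam₂)
    (hroot : ∀ Y : V, Y ≠ 0 → ∀ X : V, ⟪X, Y⟫ = 0 →
      ∃ X₁ X₂ : V, X = X₁ + X₂ ∧ ⟪X₁, Y⟫ = 0 ∧ ⟪X₂, Y⟫ = 0 ∧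
        J Y X₁ = (‖Y‖ ^ 2 * lam₁) • X₁ ∧ J Y X₂ = (‖Y‖ ^ 2 * lam₂) • X₂) :
    ∀ X Y : V, ⟪X, Y⟫ = 0 → ⟪J X Y, J Y X⟫ = 0 := by
  intro X Y hXY
  by_cases hY : Y = 0
  · have hJYX : J Y X = 0 := by
      apply ext_inner_right ℝ
      intro Z
      rw [hJ, hY]
      simp
    rw [hJYX, inner_zero_right]
  · obtain ⟨X₁, X₂, hX, h1p, h2p, h1e, h2e⟩ := hroot Y hY X hXY
    have key : ∀ (W : V) (lam : ℝ), ⟪W, Y⟫ = 0 → J Y W = (‖Y‖ ^ 2 * lam) • W →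
        ∀ Z, R Y W W Z = (lam * ‖W‖ ^ 2) * ⟪Y, Z⟫ := by
      intro W lam hWY hEig Z
      by_cases hW : W = 0
      · simp [hW]
      · have ha : ‖W‖ ≠ 0 := norm_ne_zero_iff.mpr hW
        have hb : ‖Y‖ ≠ 0 := norm_ne_zero_iff.mpr hY
        set u := ‖W‖⁻¹ • W with hu_def
        set v := ‖Y‖⁻¹ • Y with hv_def
        have hu : ‖u‖ = 1 := norm_smul_inv_norm hW
        have hv : ‖v‖ = 1 := norm_smul_inv_norm hY
        have hvu : ⟪v, u⟫ = 0 := by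
          rw [hu_def, hv_def]
          simp only [real_inner_smul_left, real_inner_smul_right]
          rw [real_inner_comm]
          rw [hWY]
          ring
        have hRJ : ∀ Z : V, R W Y Y Z = (‖Y‖ ^ 2 * lam) * ⟪W, Z⟫ := by
          intro Z
          rw [← hJ, hEig, real_inner_smul_left]
        have hJvu : J v u = lam • u := by
          apply ext_inner_right ℝ
          intro Z
          rw [hJ, real_inner_smul_left, hu_def, hv_def]
          simp only [map_smul, LinearMap.smul_apply, smul_eq_mul]
          rw [hRJ Z, real_inner_smul_left]
          field_simp
        have hdual := hJD v u hv hu hvu lam hJvu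
        have hthis := hJ u v Z
        rw [hdual, real_inner_smul_left, hu_def, hv_def] at hthis
        simp only [map_smul, LinearMap.smul_apply, smul_eq_mul,
          real_inner_smul_left] at hthis
        field_simp at hthis
        have h9 : R Y W W Z * ‖Y‖ = (lam * ‖W‖ ^ 2 * ⟪Y, Z⟫) * ‖Y‖ := by
          rw [← hthis]; ring
        exact mul_right_cancel₀ hb h9
    have k1 := key X₁ lam₁ h1p h1e
    have k2 := key X₂ lam₂ h2p h2e
    have hY1 : ⟪Y, X₁⟫ = 0 := by rw [real_inner_comm]; exact h1p
    have hY2 : ⟪Y, X₂⟫ = 0 := by rw [real_inner_comm]; exact h2p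
    have k1' : ∀ Z, R Y X₁ X₁ Z = lam₁ * ‖X₁‖ ^ 2 * ⟪Y, Z⟫ := k1
    have s6 : R Y X₁ X₁ X₂ = 0 := by rw [k1 X₂, hY2, mul_zero]
    have t6 : R Y X₂ X₂ X₁ = 0 := by rw [k2 X₁, hY1, mul_zero]
    have hA : R Y X₁ X₂ X₁ = 0 := by
      have s1 := hR3 Y X₁ X₂ X₁
      have s2 := hR2 X₂ X₁ Y X₁
      have s3 := hR1 X₂ X₁ X₁ Y
      have s4 := hR2 X₁ X₂ X₁ Y
      have s5 := hR3 X₁ X₂ Y X₁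
      linarith
    have hBB : R Y X₂ X₁ X₂ = 0 := by
      have s1 := hR3 Y X₂ X₁ X₂
      have s2 := hR2 X₁ X₂ Y X₂
      have s3 := hR1 X₁ X₂ X₂ Y
      have s4 := hR2 X₂ X₁ X₂ Y
      have s5 := hR3 X₂ X₁ Y X₂
      linarith
    have z1 : R Y X₁ X₁ X₁ = 0 := by rw [k1 X₁, hY1, mul_zero]
    have z2 : R Y X₂ X₂ X₂ = 0 := by rw [k2 X₂, hY2, mul_zero]
    have z3 : R Y X₂ X₁ X₁ = 0 := by have := hR2 Y X₂ X₁ X₁; linarith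
    have z4 : R Y X₁ X₂ X₂ = 0 := by have := hR2 Y X₁ X₂ X₂; linarith
    have hT1 : R Y X X X₁ = 0 := by
      rw [hX]
      simp only [map_add, LinearMap.add_apply]
      rw [z1, hA, z3, t6]
      ring
    have hT2 : R Y X X X₂ = 0 := by
      rw [hX]
      simp only [map_add, LinearMap.add_apply]
      rw [s6, z4, hBB, z2]
      ring
    have hJYX : J Y X = (‖Y‖ ^ 2 * lam₁) • X₁ + (‖Y‖ ^ 2 * lam₂) • X₂ := by
      apply ext_inner_right ℝ
      intro Z
      rw [hJ, hX]
      simp only [map_add, LinearMap.add_apply]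
      rw [← hJ Y X₁ Z, ← hJ Y X₂ Z, h1e, h2e]
      simp [inner_add_left, real_inner_smul_left]
    rw [hJYX, inner_add_right, real_inner_smul_right, real_inner_smul_right,
      hJ X Y X₁, hJ X Y X₂, hT1, hT2]
    ring
end

section
/- Let R be two-root Osserman with eigenvalues λ₁‖Y‖², λ₂‖Y‖² on Y^⊥, and let X ⊥ Y decompose as X = X₁ + X₂ with X_i ∈ V_i(Y). Then g(J_X Y, J_Y X) = ‖Y‖²(λ₂ − λ₁) R(Y, X₁ + X₂, X₁, X₂). -/
open RealInnerProductSpace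

theorem two_root_inner_formula {V : Type*} [NormedAddCommGroup V] [InnerProductSpace ℝ V] [FiniteDimensional ℝ V]
    (R : V →ₗ[ℝ] V →ₗ[ℝ] V →ₗ[ℝ] V →ₗ[ℝ] ℝ)
    (hR1 : ∀ X Y Z W : V, R X Y Z W = - R Y X Z W)
    (hR2 : ∀ X Y Z W : V, R X Y Z W = - R X Y W Z)
    (hR3 : ∀ X Y Z W : V, R X Y Z W = R Z W X Y)
    (hB : ∀ X Y Z W : V, R X Y Z W + R Y Z X W + R Z X Y W = 0)
    (J : V → V → V)
    (hJ : ∀ X Y Z : V, ⟪J X Y, Z⟫ = R Y X X Z)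
    (lam₁ lam₂ : ℝ) (Y : V) (hY : Y ≠ 0) (X X₁ X₂ : V)
    (hXY : ⟪X, Y⟫ = 0) (hX : X = X₁ + X₂)
    (hX₁Y : ⟪X₁, Y⟫ = 0) (hX₂Y : ⟪X₂, Y⟫ = 0)
    (h₁ : J Y X₁ = (‖Y‖ ^ 2 * lam₁) • X₁) (h₂ : J Y X₂ = (‖Y‖ ^ 2 * lam₂) • X₂) :
    ⟪J X Y, J Y X⟫ = ‖Y‖ ^ 2 * (lam₂ - lam₁) * R Y (X₁ + X₂) X₁ X₂ := by
  have zero : ∀ A B Z : V, R A B Z Z = 0 := fun A B Z => by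
    have := hR2 A B Z Z; linarith
  have hJYX : J Y X = (‖Y‖ ^ 2 * lam₁) • X₁ + (‖Y‖ ^ 2 * lam₂) • X₂ := by
    apply ext_inner_right ℝ
    intro Z
    rw [hJ, hX, map_add, LinearMap.add_apply, LinearMap.add_apply, LinearMap.add_apply,
      ← hJ, ← hJ, h₁, h₂, inner_add_left]
  rw [hJYX, inner_add_right, real_inner_smul_right, real_inner_smul_right, hJ, hJ, hX]
  simp only [map_add, LinearMap.add_apply]
  have e1 := hR2 Y X₁ X₂ X₁
  have e2 := hR2 Y X₂ X₂ X₁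
  have z1 := zero Y X₁ X₁
  have z2 := zero Y X₂ X₁
  have z3 := zero Y X₁ X₂
  have z4 := zero Y X₂ X₂
  linear_combination (‖Y‖ ^ 2 * lam₁) * z1 + (‖Y‖ ^ 2 * lam₁) * z2 +
    (‖Y‖ ^ 2 * lam₁) * e1 + (‖Y‖ ^ 2 * lam₁) * e2 +
    (‖Y‖ ^ 2 * lam₂) * z3 + (‖Y‖ ^ 2 * lam₂) * z4
end

section
/- Suppose R is a Jacobi-orthogonal and Jacobi-dual algebraic curvature tensor, X is a unit vector, and A, B, C are mutually orthogonal eigenvectors of J_X orthogonal to X with J_X A = λ_A A, J_X B = λ_B B, J_X C = λ_C C. Then R(X,A,B,C)(λ_C − λ_B) + R(X,B,A,C)(λ_C − λ_A) + R(X,C,A,B)(λ_B − λ_A) = 0. -/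
open RealInnerProductSpace

set_option maxHeartbeats 2000000 in
theorem jacobi_orthogonal_eigenvector_relation {V : Type*} [NormedAddCommGroup V] [InnerProductSpace ℝ V] [FiniteDimensional ℝ V]
    (R : V →ₗ[ℝ] V →ₗ[ℝ] V →ₗ[ℝ] V →ₗ[ℝ] ℝ)
    (hR1 : ∀ X Y Z W : V, R X Y Z W = - R Y X Z W)
    (hR2 : ∀ X Y Z W : V, R X Y Z W = - R X Y W Z)
    (hR3 : ∀ X Y Z W : V, R X Y Z W = R Z W X Y)
    (hB : ∀ X Y Z W : V, R X Y Z W + R Y Z X W + R Z X Y W = 0)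
    (J : V → V → V)
    (hJ : ∀ X Y Z : V, ⟪J X Y, Z⟫ = R Y X X Z)
    (hJO : ∀ X Y : V, ⟪X, Y⟫ = 0 → ⟪J X Y, J Y X⟫ = 0)
    (hJD : ∀ X Y : V, ‖X‖ = 1 → ‖Y‖ = 1 → ⟪X, Y⟫ = 0 →
      ∀ lam : ℝ, J X Y = lam • Y → J Y X = lam • X)
    (X A B C : V) (hX : ‖X‖ = 1)
    (hAB : ⟪A, B⟫ = 0) (hAC : ⟪A, C⟫ = 0) (hBC : ⟪B, C⟫ = 0)
    (hXA : ⟪X, A⟫ = 0) (hXB : ⟪X, B⟫ = 0) (hXC : ⟪X, C⟫ = 0)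
    (lamA lamB lamC : ℝ)
    (hA : J X A = lamA • A) (hB' : J X B = lamB • B) (hC : J X C = lamC • C) :
    R X A B C * (lamC - lamB) + R X B A C * (lamC - lamA) + R X C A B * (lamB - lamA) = 0 := by
  have hJYX : ∀ Y W : V, ⟪W, J Y X⟫ = R X Y Y W := fun Y W => by
    rw [real_inner_comm, hJ]
  -- compute J X (A ± B ± C)
  have hY1 : J X (A + B + C) = lamA • A + (lamB • B + lamC • C) := by
    apply ext_inner_right ℝ; intro Z
    rw [hJ]
    simp only [map_add, LinearMap.add_apply, ← hJ, hA, hB', hC]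
    simp [inner_add_left]
    ring
  have hY2 : J X (A + B - C) = lamA • A + (lamB • B - lamC • C) := by
    apply ext_inner_right ℝ; intro Z
    rw [hJ]
    simp only [map_add, sub_eq_add_neg, ← neg_one_smul ℝ B, ← neg_one_smul ℝ C, map_smul, LinearMap.add_apply, LinearMap.smul_apply, ← hJ, hA, hB', hC]
    simp [inner_add_left, inner_sub_left]
    ring
  have hY3 : J X (A - B + C) = lamA • A - (lamB • B - lamC • C) := by
    apply ext_inner_right ℝ; intro Z
    rw [hJ]
    simp only [map_add, sub_eq_add_neg, ← neg_one_smul ℝ B, ← neg_one_smul ℝ C, map_smul, LinearMap.add_apply, LinearMap.smul_apply, ← hJ, hA, hB', hC]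
    simp [inner_add_left, inner_sub_left]
    ring
  have hY4 : J X (A - B - C) = lamA • A - (lamB • B + lamC • C) := by
    apply ext_inner_right ℝ; intro Z
    rw [hJ]
    simp only [map_add, sub_eq_add_neg, ← neg_one_smul ℝ B, ← neg_one_smul ℝ C, map_smul, LinearMap.add_apply, LinearMap.smul_apply, ← hJ, hA, hB', hC]
    simp [inner_add_left, inner_sub_left]
    ring
  have o1 := hJO X (A + B + C) (by simp [inner_add_right, hXA, hXB, hXC])
  have o2 := hJO X (A + B - C) (by simp [inner_add_right, inner_sub_right, hXA, hXB, hXC])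
  have o3 := hJO X (A - B + C) (by simp [inner_add_right, inner_sub_right, hXA, hXB, hXC])
  have o4 := hJO X (A - B - C) (by simp [inner_add_right, inner_sub_right, hXA, hXB, hXC])
  rw [hY1] at o1
  rw [hY2] at o2
  rw [hY3] at o3
  rw [hY4] at o4
  simp only [inner_add_left, inner_sub_left, real_inner_smul_left, hJYX,
    map_add, map_sub, map_smul, smul_eq_mul, LinearMap.add_apply, LinearMap.sub_apply,
    LinearMap.smul_apply] at o1 o2 o3 o4
  have r1 := hR2 X B C A
  have r2 := hR2 X C B A
  have r3 := hR2 X A C B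
  linear_combination (o1 - o2 - o3 + o4) / 4 - lamA * r1 - lamA * r2 - lamB * r3
end
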